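/- SIC rule for select-of-store: model arrays over index type I (with decidable equality) and value type V as functions I → V. Let i, j : X × 𝕍 → I, e : X × 𝕍 → V, and arr : X × 𝕍 → (I → V) be terms, with SICs ti, tj, te, and tsel respectively for i, j, e, and the term fun (x,v) => arr (x,v) (j (x,v)), all w.r.t. X. Then Ψ v := (ti v ∧ tj v ∧ (∀ x, if i (x,v) = j (x,v) then True else False → True) ∧ ((∃ x, i (x,v) = j (x,v)) → te v) ∧ ((∃ x, i (x,v) ≠ j (x,v)) → tsel v)) ∨ (te v ∧ tsel v ∧ ∀ x, e (x,v) = arr (x,v) (j (x,v))) is a SIC for the term fun (x,v) => (Function.update (arr (x,v)) (i (x,v)) (e (x,v))) (j (x,v)) w.r.t. X. (Here, under ti ∧ tj, the condition i = j is independent of x, so the existentials coincide with universals.) -/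

import Mathlib

/-!
Read-over-write turns `select (store a i e) j` into `if i = j then e else a j`. Under the SICs of
`i` and `j` the condition `i = j` does not depend on `x`, so the `ite` rule applies and gives the
first disjunct. For the second, `e = a j` makes the term equal to `a j` whichever branch is taken.
-/

open Function

lemma Function.update_apply_eq_of_eq_apply {α β : Type*} [DecidableEq α] {f : α → β}
    {a a' : α} {b : β} (h : b = f a) : update f a' b a = f a := by
  by_cases ha : a = a'
  · subst ha
    rw [update_self, h]
  · exact update_of_ne ha b f

section SIC

variable {X 𝕍 T : Type*}

/-- `Ψ` is a sufficient independence condition (SIC) for `Δ` with respect to `X`. -/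
def IsSIC (Δ : X × 𝕍 → T) (Ψ : 𝕍 → Prop) : Prop :=
  ∀ v, Ψ v → ∀ x y : X, Δ (x, v) = Δ (y, v)

namespace IsSIC

variable {Δ Δ' : X × 𝕍 → T} {Ψ Ψ' : 𝕍 → Prop}

lemma mono (h : IsSIC Δ Ψ) (hΨ : ∀ v, Ψ' v → Ψ v) : IsSIC Δ Ψ' :=
  fun v hv => h v (hΨ v hv)

lemma or (h : IsSIC Δ Ψ) (h' : IsSIC Δ Ψ') : IsSIC Δ (fun v => Ψ v ∨ Ψ' v) := by
  rintro v (hv | hv)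
  exacts [h v hv, h' v hv]

lemma congr (h : IsSIC Δ' Ψ) :
    IsSIC Δ (fun v => Ψ v ∧ ∀ x, Δ (x, v) = Δ' (x, v)) := by
  rintro v ⟨hv, hΔ⟩ x y
  rw [hΔ x, hΔ y, h v hv x y]

lemma eq_iff_eq {I : Type*} {i j : X × 𝕍 → I} {ti tj : 𝕍 → Prop}
    (hi : IsSIC i ti) (hj : IsSIC j tj) :
    ∀ v, ti v → tj v → ∀ x y : X, (i (x, v) = j (x, v) ↔ i (y, v) = j (y, v)) := by
  intro v hti htj x y
  rw [hi v hti x y, hj v htj x y]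

lemma ite {c : X × 𝕍 → Prop} [DecidablePred c] {f g : X × 𝕍 → T} {tf tg : 𝕍 → Prop}
    (hf : IsSIC f tf) (hg : IsSIC g tg) :
    IsSIC (fun p => if c p then f p else g p)
      (fun v => (∀ x y, c (x, v) ↔ c (y, v)) ∧
        ((∃ x, c (x, v)) → tf v) ∧ ((∃ x, ¬ c (x, v)) → tg v)) := by
  rintro v ⟨hc, htf, htg⟩ x y
  by_cases hcx : c (x, v)
  · have hcy : c (y, v) := (hc x y).mp hcx
    simp only [if_pos hcx, if_pos hcy]
    exact hf v (htf ⟨x, hcx⟩) x y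
  · have hcy : ¬ c (y, v) := mt (hc x y).mpr hcx
    simp only [if_neg hcx, if_neg hcy]
    exact hg v (htg ⟨x, hcx⟩) x y

end IsSIC

end SIC

/-- SIC rule for select-of-store on arrays. -/
theorem sic_select_store_rule {X 𝕍 I V : Type*} [DecidableEq I]
    (i j : X × 𝕍 → I) (e : X × 𝕍 → V) (arr : X × 𝕍 → (I → V))
    (ti tj te tsel : 𝕍 → Prop)
    (hi : ∀ v, ti v → ∀ x y : X, i (x, v) = i (y, v))
    (hj : ∀ v, tj v → ∀ x y : X, j (x, v) = j (y, v))
    (he : ∀ v, te v → ∀ x y : X, e (x, v) = e (y, v))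
    (hsel : ∀ v, tsel v → ∀ x y : X, arr (x, v) (j (x, v)) = arr (y, v) (j (y, v))) :
    ∀ v, ((ti v ∧ tj v ∧
            (∀ x, if i (x, v) = j (x, v) then True else (False → True)) ∧
            ((∃ x, i (x, v) = j (x, v)) → te v) ∧
            ((∃ x, i (x, v) ≠ j (x, v)) → tsel v)) ∨
          (te v ∧ tsel v ∧ ∀ x, e (x, v) = arr (x, v) (j (x, v)))) →
      ∀ x y : X,
        (Function.update (arr (x, v)) (i (x, v)) (e (x, v))) (j (x, v)) =
        (Function.update (arr (y, v)) (i (y, v)) (e (y, v))) (j (y, v)) := by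
  have hsel' : IsSIC (fun p => arr p (j p)) tsel := hsel
  have select_store_eq_ite :
      (fun p => update (arr p) (i p) (e p) (j p)) =
        fun p => if i p = j p then e p else arr p (j p) := by
    simp only [update_apply, eq_comm]
  have hite := select_store_eq_ite ▸ IsSIC.ite (c := fun p => i p = j p) (he : IsSIC e te) hsel'
  have hsame := IsSIC.congr (Δ := fun p => update (arr p) (i p) (e p) (j p)) hsel'
  refine (hite.mono ?_).or (hsame.mono ?_)
  · rintro v ⟨hti, htj, -, hte, htsel⟩
    exact ⟨IsSIC.eq_iff_eq hi hj v hti htj, hte, htsel⟩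
  · rintro v ⟨-, htsel, hejv⟩
    exact ⟨htsel, fun x => update_apply_eq_of_eq_apply (hejv x)⟩
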